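/- Let γ > 0, let χ ∈ {γ, 2/γ}, set β = −χω₁ and q = γ + 2/γ. Then for each i ∈ {1,2}, with î denoting the other index, ⟨h₂,eᵢ⟩·(q + 2⟨ω_î,β⟩) + (χ/3 + 2/χ) − (4/χ)·(1 + ⟨β,γeᵢ⟩/2) − (4/χ³)·⟨β,γeᵢ⟩·(1 + ⟨β,γeᵢ⟩/2) = 0. (This is the vanishing, for the fully degenerate weights, of the double-pole coefficient arising in the derivation of the level-three singular vector ψ₋₃,χ; for i = 1 the expression equals (2γ − 4/χ)(1 − γ/χ), which vanishes for χ ∈ {γ, 2/γ}.) -/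
import Mathlib

noncomputable section

/-- The symmetric bilinear form on `V = ℝ²` whose Gram matrix in the basis `(e₁, e₂)`
is the Cartan matrix of `𝔰𝔩₃`. -/
def B (x y : ℝ × ℝ) : ℝ := 2 * x.1 * y.1 - x.1 * y.2 - x.2 * y.1 + 2 * x.2 * y.2

/-- The first simple root `e₁`. -/
def e1 : ℝ × ℝ := (1, 0)

/-- The second simple root `e₂`. -/
def e2 : ℝ × ℝ := (0, 1)

/-- The first fundamental weight `ω₁ = (2e₁ + e₂)/3`. -/
def ω1 : ℝ × ℝ := ((1 : ℝ) / 3) • ((2 : ℝ) • e1 + e2)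

/-- The second fundamental weight `ω₂ = (e₁ + 2e₂)/3`. -/
def ω2 : ℝ × ℝ := ((1 : ℝ) / 3) • (e1 + (2 : ℝ) • e2)

/-- `h₂ = (−e₁ + e₂)/3`. -/
def h2 : ℝ × ℝ := ((1 : ℝ) / 3) • (-e1 + e2)

/-- Vanishing, for the fully degenerate weights `β = −χω₁` with `χ ∈ {γ, 2/γ}`, of the
double-pole coefficient arising in the derivation of the level-three singular vector
`ψ₋₃,χ`: for each `i ∈ {1,2}` (with `î` the other index),
`⟨h₂,eᵢ⟩(q + 2⟨ω_î,β⟩) + (χ/3 + 2/χ) − (4/χ)(1 + ⟨β,γeᵢ⟩/2)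
  − (4/χ³)⟨β,γeᵢ⟩(1 + ⟨β,γeᵢ⟩/2) = 0`. -/
theorem stmt3 (γ χ : ℝ) (hγ : 0 < γ) (hχ : χ = γ ∨ χ = 2 / γ)
    (β : ℝ × ℝ) (hβ : β = (-χ) • ω1) (q : ℝ) (hq : q = γ + 2 / γ) :
    (B h2 e1 * (q + 2 * B ω2 β) + (χ / 3 + 2 / χ)
        - (4 / χ) * (1 + B β (γ • e1) / 2)
        - (4 / χ ^ 3) * B β (γ • e1) * (1 + B β (γ • e1) / 2) = 0) ∧
    (B h2 e2 * (q + 2 * B ω1 β) + (χ / 3 + 2 / χ)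
        - (4 / χ) * (1 + B β (γ • e2) / 2)
        - (4 / χ ^ 3) * B β (γ • e2) * (1 + B β (γ • e2) / 2) = 0) := by
  have hγ0 : γ ≠ 0 := ne_of_gt hγ
  rcases hχ with h | h <;>
    subst h hβ hq <;>
    constructor <;>
    · simp only [B, e1, e2, ω1, ω2, h2, Prod.smul_mk, Prod.mk_add_mk, Prod.neg_mk,
        smul_eq_mul, Prod.smul_fst, Prod.smul_snd, Prod.fst_add, Prod.snd_add,
        Prod.fst_neg, Prod.snd_neg]
      field_simp
      ring
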